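/- arXiv:1107.0104 — 3 statements merged into one kernel-verified Lean document; each statement's English description precedes it below -/
import Mathlib

section
/- Suppose for every point set Q in R^δ there is a Tverberg point of depth ⌈|Q|/ρ⌉ (ρ ≥ 1 real). Then for any n-point set P in R^d with d ≥ δ, there exists a Tverberg point of depth ⌈n/ρ^{⌈d/δ⌉}⌉. -/
/-- `x` has Tverberg depth `r` with respect to the finite set `Q`. -/
def HasTverbergDepth {m : ℕ} (Q : Finset (EuclideanSpace ℝ (Fin m)))
    (x : EuclideanSpace ℝ (Fin m)) (r : ℕ) : Prop :=
  ∃ f : Fin r → Finset (EuclideanSpace ℝ (Fin m)),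
    (∀ i, (f i).Nonempty) ∧
    (∀ i j, i ≠ j → Disjoint (f i) (f j)) ∧
    (∀ p ∈ Q, ∃ i, p ∈ f i) ∧ (∀ i, f i ⊆ Q) ∧
    ∀ i, x ∈ convexHull ℝ ((f i : Set (EuclideanSpace ℝ (Fin m))))

/-!
Induction on `k = ⌈d/δ⌉`. Project to `ℝ^δ` by a linear map `π` whose kernel has dimension at
most `d - δ`, and take a Tverberg point `c` of depth `⌈n/ρ⌉` of the projected points. Every part
hull meets the fibre `π ⁻¹' {c}`, a translate of `ker π`; one point picked there per part gives
`⌈n/ρ⌉` points in dimension `d - δ`, and these have a Tverberg point of depth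
`⌈⌈n/ρ⌉/ρ^(k-1)⌉ ≥ ⌈n/ρ^k⌉`, which is then one for the original points (merge the parts of the
composed partition). Projecting may identify points and the picked points may coincide, so the
argument is run for families of points. The hypothesis passes from sets to families because
injective families are dense, while having a Tverberg point of given depth is a closed condition:
the Tverberg points stay in a compact set and the part hulls depend continuously on the points.
-/

open Set Filter Function Metric Module Topology

section Family

variable {E F : Type*} [AddCommGroup E] [Module ℝ E] [AddCommGroup F] [Module ℝ F]
  {ι : Type*} {x : ι → E} {c : E} {r : ℕ}

def HasFamilyTverbergDepth (x : ι → E) (c : E) (r : ℕ) : Prop :=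
  ∃ φ : ι → Fin r, Surjective φ ∧ ∀ j, c ∈ convexHull ℝ (x '' (φ ⁻¹' {j}))

theorem HasFamilyTverbergDepth.map (h : HasFamilyTverbergDepth x c r) (f : E →ᵃ[ℝ] F) :
    HasFamilyTverbergDepth (f ∘ x) (f c) r := by
  obtain ⟨φ, hφ, hc⟩ := h
  exact ⟨φ, hφ, fun j => by rw [image_comp, ← f.image_convexHull]; exact mem_image_of_mem f (hc j)⟩

theorem HasFamilyTverbergDepth.of_representatives {κ : Type*} {φ : ι → κ} (hφ : Surjective φ)
    {z : κ → E} (hz : ∀ j, z j ∈ convexHull ℝ (x '' (φ ⁻¹' {j})))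
    (h : HasFamilyTverbergDepth z c r) : HasFamilyTverbergDepth x c r := by
  obtain ⟨ψ, hψ, hc⟩ := h
  refine ⟨ψ ∘ φ, hψ.comp hφ, fun l => convexHull_min ?_ (convex_convexHull ℝ _) (hc l)⟩
  rintro _ ⟨j, hj, rfl⟩
  refine convexHull_mono (image_mono fun i hi => ?_) (hz j)
  simp_all

theorem HasFamilyTverbergDepth.mono {r' : ℕ} (h : HasFamilyTverbergDepth x c r) (hr : r' ≤ r)
    (hr' : 0 < r') : HasFamilyTverbergDepth x c r' := by
  have : NeZero r' := ⟨hr'.ne'⟩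
  obtain ⟨φ, hφ, hc⟩ := h
  have hψ : Surjective (invFun (Fin.castLE hr)) := invFun_surjective (Fin.castLE_injective hr)
  refine .of_representatives hφ hc ⟨_, hψ, fun l => subset_convexHull ℝ _ ?_⟩
  obtain ⟨j, rfl⟩ := hψ l
  exact ⟨j, rfl, rfl⟩

theorem hasFamilyTverbergDepth_of_isEmpty [IsEmpty ι] (x : ι → E) (c : E) :
    HasFamilyTverbergDepth x c 0 :=
  ⟨isEmptyElim, fun j => j.elim0, fun j => j.elim0⟩

theorem hasFamilyTverbergDepth_card [Fintype ι] [Subsingleton E] (x : ι → E) (c : E) :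
    HasFamilyTverbergDepth x c (Fintype.card ι) := by
  refine ⟨Fintype.equivFin ι, (Fintype.equivFin ι).surjective, fun j => subset_convexHull ℝ _ ?_⟩
  exact ⟨(Fintype.equivFin ι).symm j, by simp, Subsingleton.elim _ _⟩

end Family

section Limits

variable {E : Type*} [NormedAddCommGroup E] [NormedSpace ℝ E] {ι : Type*}

theorem convexHull_image_subset_thickening {x y : ι → E} {s : Set ι} {ε : ℝ}
    (h : ∀ i ∈ s, dist (y i) (x i) < ε) :
    convexHull ℝ (y '' s) ⊆ thickening ε (convexHull ℝ (x '' s)) := by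
  refine convexHull_min ?_ ((convex_convexHull ℝ _).thickening ε)
  rintro _ ⟨i, hi, rfl⟩
  exact mem_thickening_iff.2 ⟨x i, subset_convexHull ℝ _ ⟨i, hi, rfl⟩, h i hi⟩

theorem mem_convexHull_image_of_tendsto [Fintype ι] {α : Type*} {l : Filter α} [l.NeBot]
    {y : α → ι → E} {x : ι → E} {c : α → E} {c₀ : E} {s : Set ι}
    (hy : Tendsto y l (𝓝 x)) (hc : Tendsto c l (𝓝 c₀))
    (hmem : ∀ᶠ a in l, c a ∈ convexHull ℝ (y a '' s)) :
    c₀ ∈ convexHull ℝ (x '' s) := by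
  have hclosed : IsClosed (convexHull ℝ (x '' s)) :=
    ((s.toFinite.image x).isCompact_convexHull ℝ).isClosed
  rw [← hclosed.closure_eq, Metric.mem_closure_iff]
  intro ε hε
  obtain ⟨a, hya, hca, hmema⟩ := ((tendsto_nhds.1 hy (ε / 2) (half_pos hε)).and
    ((tendsto_nhds.1 hc (ε / 2) (half_pos hε)).and hmem)).exists
  obtain ⟨b, hb, hcb⟩ := mem_thickening_iff.1 <| convexHull_image_subset_thickening
    (fun i _ => (dist_le_pi_dist (y a) x i).trans_lt hya) hmema
  refine ⟨b, hb, ?_⟩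
  calc dist c₀ b ≤ dist (c a) c₀ + dist (c a) b := dist_triangle_left _ _ _
    _ < ε / 2 + ε / 2 := add_lt_add hca hcb
    _ = ε := add_halves ε

theorem isClosed_setOf_exists_forall_mem_convexHull [Fintype ι] [ProperSpace E] {κ : Type*}
    (s : κ → Set ι) : IsClosed {x : ι → E | ∃ c, ∀ j, c ∈ convexHull ℝ (x '' s j)} := by
  rcases isEmpty_or_nonempty κ with hκ | ⟨⟨j₀⟩⟩
  · simp [isClosed_univ]
  refine IsSeqClosed.isClosed fun y x hy hyx => ?_
  choose c hc using hy
  obtain ⟨R, hR⟩ := (isBounded_range_of_tendsto y hyx).subset_closedBall 0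
  have hcR : ∀ n, c n ∈ closedBall (0 : E) R := by
    refine fun n => convexHull_min ?_ (convex_closedBall 0 R) (hc n j₀)
    rintro _ ⟨i, -, rfl⟩
    exact mem_closedBall_zero_iff.2 ((norm_le_pi_norm (y n) i).trans
      (mem_closedBall_zero_iff.1 (hR ⟨n, rfl⟩)))
  obtain ⟨a, -, ψ, hψ, hca⟩ := tendsto_subseq_of_bounded isBounded_closedBall hcR
  exact ⟨a, fun j => mem_convexHull_image_of_tendsto (hyx.comp hψ.tendsto_atTop) hca
    (Eventually.of_forall fun n => hc (ψ n) j)⟩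

theorem isClosed_setOf_exists_hasFamilyTverbergDepth [Fintype ι] [ProperSpace E] (r : ℕ) :
    IsClosed {x : ι → E | ∃ c, HasFamilyTverbergDepth x c r} := by
  have : {x : ι → E | ∃ c, HasFamilyTverbergDepth x c r} =
      ⋃ φ : {φ : ι → Fin r // Surjective φ},
        {x | ∃ c, ∀ j, c ∈ convexHull ℝ (x '' (φ.1 ⁻¹' {j}))} := by
    ext x
    simp only [HasFamilyTverbergDepth, mem_ofPred_eq, mem_iUnion, Subtype.exists, exists_prop]
    exact exists_comm.trans (exists_congr fun φ => exists_and_left)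
  rw [this]
  exact isClosed_iUnion_of_finite fun φ => isClosed_setOf_exists_forall_mem_convexHull _

theorem dense_setOf_injective [Finite ι] [Nontrivial E] : Dense {y : ι → E | Injective y} := by
  obtain ⟨n, ⟨e⟩⟩ := Finite.exists_equiv_fin ι
  obtain ⟨u, hu⟩ := exists_ne (0 : E)
  set v : ι → E := fun i => ((e i : ℕ) : ℝ) • u
  have hv : Injective v := fun i j hij =>
    e.injective (Fin.ext (Nat.cast_injective (smul_left_injective ℝ hu hij)))
  intro x
  refine mem_closure_of_tendsto (f := fun t : ℝ => x + t • v) (b := 𝓝[≠] 0) ?_ ?_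
  · have hcont : Continuous fun t : ℝ => x + t • v := by fun_prop
    exact tendsto_nhdsWithin_of_tendsto_nhds (hcont.tendsto' 0 x (by simp))
  · simp only [Function.Injective, mem_ofPred_eq]
    refine eventually_all.2 fun i => eventually_all.2 fun j => ?_
    by_cases hij : i = j
    · exact Eventually.of_forall fun _ _ => hij
    have hbad : {t : ℝ | x i + t • v i = x j + t • v j}.Subsingleton := by
      intro t₁ ht₁ t₂ ht₂
      have : (t₁ - t₂) • (v i - v j) = 0 := by
        simp only [mem_ofPred_eq] at ht₁ ht₂
        linear_combination (norm := module) ht₁ - ht₂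
      exact sub_eq_zero.1 ((smul_eq_zero.1 this).resolve_right (sub_ne_zero.2 (hv.ne hij)))
    filter_upwards [nhdsNE_of_nhdsNE_sdiff_finite univ_mem hbad.finite] with t ht hxt
    exact absurd (by simpa using hxt) ht.2

theorem exists_hasFamilyTverbergDepth_of_injective [Fintype ι] [ProperSpace E] [Nontrivial E]
    {r : ℕ} (h : ∀ y : ι → E, Injective y → ∃ c, HasFamilyTverbergDepth y c r) (x : ι → E) :
    ∃ c, HasFamilyTverbergDepth x c r :=
  (isClosed_setOf_exists_hasFamilyTverbergDepth r).closure_subset_iff.2 h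
    ((dense_setOf_injective (ι := ι) (E := E)).closure_eq ▸ mem_univ x)

end Limits

theorem exists_linearMap_finrank_ker_le (K V W : Type*) [Field K] [AddCommGroup V] [Module K V]
    [FiniteDimensional K V] [AddCommGroup W] [Module K W] [FiniteDimensional K W] :
    ∃ π : V →ₗ[K] W, finrank K (LinearMap.ker π) ≤ finrank K V - finrank K W := by
  obtain ⟨v, hv⟩ := exists_linearIndependent_of_le_finrank (R := K) (M := V)
    (Nat.sub_le (finrank K V) (finrank K W))
  set U := Submodule.span K (range v)
  have hU : finrank K U = finrank K V - finrank K W := by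
    rw [finrank_span_eq_card hv, Fintype.card_fin]
  have hquot : finrank K (V ⧸ U) ≤ finrank K W := by
    have := U.finrank_quotient_add_finrank
    omega
  obtain ⟨f, hf⟩ := Module.Free.exists_linearMap_injective_of_linearIndependent_of_lift_rank_le
    (M := V ⧸ U) (Module.finBasis K W).linearIndependent
    (by simpa [← finrank_eq_rank] using hquot)
  refine ⟨f ∘ₗ U.mkQ, ?_⟩
  rw [LinearMap.ker_comp_of_ker_eq_bot _ (LinearMap.ker_eq_bot.2 hf), U.ker_mkQ, hU]

theorem hasTverbergDepth_image_iff {m : ℕ} [DecidableEq (EuclideanSpace ℝ (Fin m))] {ι : Type*}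
    [Fintype ι] {x : ι → EuclideanSpace ℝ (Fin m)} (hx : Injective x)
    {c : EuclideanSpace ℝ (Fin m)} {r : ℕ} :
    HasTverbergDepth (Finset.univ.image x) c r ↔ HasFamilyTverbergDepth x c r := by
  constructor
  · rintro ⟨f, hne, hdisj, hcover, hsub, hc⟩
    choose φ hφ using fun i => hcover (x i) (Finset.mem_image_of_mem x (Finset.mem_univ i))
    have hpart : ∀ j, (f j : Set _) = x '' (φ ⁻¹' {j}) := by
      intro j
      ext p
      constructor
      · intro hp
        obtain ⟨i, -, rfl⟩ := Finset.mem_image.1 (hsub j hp)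
        by_contra hij
        exact Finset.disjoint_left.1 (hdisj (φ i) j fun h => hij ⟨i, h, rfl⟩) (hφ i) hp
      · rintro ⟨i, rfl, rfl⟩
        exact hφ i
    refine ⟨φ, fun j => ?_, fun j => hpart j ▸ hc j⟩
    obtain ⟨p, hp⟩ := hne j
    rw [← Finset.mem_coe, hpart j] at hp
    obtain ⟨i, hi, -⟩ := hp
    exact ⟨i, hi⟩
  · rintro ⟨φ, hφ, hc⟩
    have hpart : ∀ j, ((Finset.univ.filter (φ · = j)).image x : Set _) = x '' (φ ⁻¹' {j}) := by
      intro j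
      simp [Set.preimage, Set.image]
    refine ⟨fun j => (Finset.univ.filter (φ · = j)).image x, fun j => ?_, fun i j hij => ?_,
      fun p hp => ?_, fun j => ?_, fun j => hpart j ▸ hc j⟩
    · obtain ⟨i, hi⟩ := hφ j
      exact ⟨x i, Finset.mem_image.2 ⟨i, by simpa using hi, rfl⟩⟩
    · simp only [Finset.disjoint_left, Finset.mem_image, Finset.mem_filter]
      rintro _ ⟨a, ⟨-, rfl⟩, rfl⟩ ⟨b, ⟨-, hb⟩, hab⟩
      exact hij (hx hab ▸ hb)
    · obtain ⟨i, -, rfl⟩ := Finset.mem_image.1 hp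
      exact ⟨φ i, Finset.mem_image.2 ⟨i, by simp, rfl⟩⟩
    · exact Finset.image_subset_image (Finset.subset_univ _)

theorem ceil_div_pow_succ_le {ρ : ℝ} (hρ : 0 < ρ) (N k : ℕ) :
    ⌈(N : ℝ) / ρ ^ (k + 1)⌉.toNat ≤ ⌈(⌈(N : ℝ) / ρ⌉.toNat : ℝ) / ρ ^ k⌉.toNat := by
  simp only [Int.ceil_toNat]
  refine Nat.ceil_mono ?_
  rw [pow_succ', ← div_div]
  exact div_le_div_of_nonneg_right (Nat.le_ceil _) (by positivity)

theorem exists_hasFamilyTverbergDepth_of_finrank_le {V W : Type*} [AddCommGroup V] [Module ℝ V]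
    [FiniteDimensional ℝ V] [AddCommGroup W] [Module ℝ W] [FiniteDimensional ℝ W]
    {ρ : ℝ} (hρ : 0 < ρ)
    (hW : ∀ (ι : Type) [Fintype ι] (x : ι → W),
      ∃ c, HasFamilyTverbergDepth x c ⌈(Fintype.card ι : ℝ) / ρ⌉.toNat)
    (k : ℕ) (hV : finrank ℝ V ≤ k * finrank ℝ W) (ι : Type) [Fintype ι] (x : ι → V) :
    ∃ c, HasFamilyTverbergDepth x c ⌈(Fintype.card ι : ℝ) / ρ ^ k⌉.toNat := by
  induction k generalizing V ι with
  | zero =>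
    have : Subsingleton V := finrank_zero_iff.1 (by simpa using hV)
    exact ⟨0, by simpa using hasFamilyTverbergDepth_card x 0⟩
  | succ k ih =>
    rcases isEmpty_or_nonempty ι with hι | ⟨⟨i₀⟩⟩
    · exact ⟨0, by simpa using hasFamilyTverbergDepth_of_isEmpty x 0⟩
    obtain ⟨π, hπ⟩ := exists_linearMap_finrank_ker_le ℝ V W
    obtain ⟨c, φ, hφ, hc⟩ := hW ι (π ∘ x)
    have hlift : ∀ j, ∃ z ∈ convexHull ℝ (x '' (φ ⁻¹' {j})), π z = c := fun j => by
      simpa only [image_comp, ← π.image_convexHull, mem_image] using hc j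
    choose z hz hπz using hlift
    let w : Fin _ → LinearMap.ker π := fun j => ⟨z j - z (φ i₀), by simp [hπz]⟩
    have hker : finrank ℝ (LinearMap.ker π) ≤ k * finrank ℝ W :=
      hπ.trans (Nat.sub_le_of_le_add (by rwa [← Nat.succ_mul]))
    obtain ⟨c', hc'⟩ := ih hker _ w
    let shift : LinearMap.ker π →ᵃ[ℝ] V :=
      (AffineEquiv.constVAdd ℝ V (z (φ i₀))).toAffineMap.comp (LinearMap.ker π).subtype.toAffineMap
    have hzw : shift ∘ w = z := funext fun j => by simp [shift, w]
    have hdepth := (hc'.map shift).of_representatives hφ (hzw ▸ hz)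
    refine ⟨_, hdepth.mono (by simpa using ceil_div_pow_succ_le hρ (Fintype.card ι) k) ?_⟩
    simp only [Int.ceil_toNat, Nat.ceil_pos]
    have : 0 < Fintype.card ι := Fintype.card_pos_iff.2 ⟨i₀⟩
    positivity

theorem dimension_reduction_general (δ d : ℕ) (hδ : 1 ≤ δ)
    (ρ : ℝ) (hρ : 1 ≤ ρ)
    (hyp : ∀ Q : Finset (EuclideanSpace ℝ (Fin δ)),
      ∃ c, HasTverbergDepth Q c (⌈(Q.card : ℝ) / ρ⌉.toNat))
    (P : Finset (EuclideanSpace ℝ (Fin d))) :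
    ∃ c, HasTverbergDepth P c
      (⌈(P.card : ℝ) / ρ ^ (⌈(d : ℝ) / (δ : ℝ)⌉.toNat)⌉.toNat) := by
  classical
  have hρ₀ : 0 < ρ := one_pos.trans_le hρ
  have : Nontrivial (EuclideanSpace ℝ (Fin δ)) :=
    Module.nontrivial_of_finrank_pos (R := ℝ) (by simp; omega)
  have hfamily (ι : Type) [Fintype ι] (x : ι → EuclideanSpace ℝ (Fin δ)) :
      ∃ c, HasFamilyTverbergDepth x c ⌈(Fintype.card ι : ℝ) / ρ⌉.toNat := by
    refine exists_hasFamilyTverbergDepth_of_injective (fun y hy => ?_) x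
    obtain ⟨c, hc⟩ := hyp (Finset.univ.image y)
    rw [Finset.card_image_of_injective _ hy, Finset.card_univ, hasTverbergDepth_image_iff hy] at hc
    exact ⟨c, hc⟩
  have hd : finrank ℝ (EuclideanSpace ℝ (Fin d)) ≤
      ⌈(d : ℝ) / δ⌉.toNat * finrank ℝ (EuclideanSpace ℝ (Fin δ)) := by
    have hδ₀ : (0 : ℝ) < δ := by exact_mod_cast hδ
    simp only [finrank_euclideanSpace_fin, Int.ceil_toNat]
    exact_mod_cast (div_le_iff₀ hδ₀).1 (Nat.le_ceil ((d : ℝ) / δ))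
  obtain ⟨c, hc⟩ := exists_hasFamilyTverbergDepth_of_finrank_le hρ₀ hfamily _ hd P ((↑) : P → _)
  have hP : Finset.univ.image ((↑) : P → _) = P := by
    rw [Finset.univ_eq_attach, Finset.attach_image_val]
  rw [← hasTverbergDepth_image_iff Subtype.val_injective, hP, Fintype.card_coe] at hc
  exact ⟨c, hc⟩

/-- Dimension reduction: if every point set in `ℝ^δ` has a Tverberg point of depth
`⌈|Q|/ρ⌉`, then every `n`-point set in `ℝ^d` (`d ≥ δ`) has a Tverberg point of
depth `⌈n/ρ^⌈d/δ⌉⌉`. -/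
theorem dimension_reduction (δ d : ℕ) (hδ : 1 ≤ δ) (hdδ : δ ≤ d)
    (ρ : ℝ) (hρ : 1 ≤ ρ)
    (hyp : ∀ Q : Finset (EuclideanSpace ℝ (Fin δ)),
      ∃ c, HasTverbergDepth Q c (⌈(Q.card : ℝ) / ρ⌉.toNat))
    (P : Finset (EuclideanSpace ℝ (Fin d))) :
    ∃ c, HasTverbergDepth P c
      (⌈(P.card : ℝ) / ρ ^ (⌈(d : ℝ) / (δ : ℝ)⌉.toNat)⌉.toNat) :=
  dimension_reduction_general δ d hδ ρ hρ hyp P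
end

section
/- Let P be a set of n points in R^d, d ≥ 2, and suppose that for every n-point set in R^{d−1} there exists a Tverberg point of depth ⌈n/2^{d−1}⌉. Then P has a Tverberg point of depth at least ⌈n/2^d⌉, obtained by projecting P onto the hyperplane x_d = 0, taking a Tverberg point for the projection, and applying the lifting lemma; here one uses ⌈⌈n/2^{d−1}⌉/2⌉ ≥ ⌈n/2^d⌉. -/
open Finset Function

structure IsIndexedPartition {ι E : Type*} (Q : Finset E) (f : ι → Finset E) : Prop where
  nonempty : ∀ i, (f i).Nonempty
  disjoint : ∀ i j, i ≠ j → Disjoint (f i) (f j)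
  cover : ∀ p ∈ Q, ∃ i, p ∈ f i
  subset : ∀ i, f i ⊆ Q

theorem hasTverbergDepth_iff {m : ℕ} {Q : Finset (EuclideanSpace ℝ (Fin m))}
    {x : EuclideanSpace ℝ (Fin m)} {r : ℕ} :
    HasTverbergDepth Q x r ↔ ∃ f : Fin r → Finset (EuclideanSpace ℝ (Fin m)),
      IsIndexedPartition Q f ∧ ∀ i, x ∈ convexHull ℝ (f i : Set (EuclideanSpace ℝ (Fin m))) :=
  ⟨fun ⟨f, h₁, h₂, h₃, h₄, h₅⟩ => ⟨f, ⟨h₁, h₂, h₃, h₄⟩, h₅⟩,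
    fun ⟨f, ⟨h₁, h₂, h₃, h₄⟩, h₅⟩ => ⟨f, h₁, h₂, h₃, h₄, h₅⟩⟩

namespace IsIndexedPartition

variable {ι κ E F : Type*} {Q : Finset E}

theorem comap [DecidableEq F] (π : E → F) {g : ι → Finset F}
    (hg : IsIndexedPartition (Q.image π) g) :
    IsIndexedPartition Q fun i => Q.filter (π · ∈ g i) where
  nonempty i := by
    obtain ⟨q, hq⟩ := hg.nonempty i
    obtain ⟨p, hp, rfl⟩ := mem_image.mp (hg.subset i hq)
    exact ⟨p, mem_filter.mpr ⟨hp, hq⟩⟩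
  disjoint i j hij := disjoint_filter_filter' _ _ fun _ hi hj p hp =>
    disjoint_left.mp (hg.disjoint i j hij) (hi p hp) (hj p hp)
  cover p hp := by
    obtain ⟨i, hi⟩ := hg.cover (π p) (mem_image_of_mem π hp)
    exact ⟨i, mem_filter.mpr ⟨hp, hi⟩⟩
  subset _ := filter_subset _ _

theorem coarsen [Fintype ι] [DecidableEq κ] [DecidableEq E] {f : ι → Finset E}
    (hf : IsIndexedPartition Q f) (φ : ι → κ) (hφ : Surjective φ) :
    IsIndexedPartition Q fun k => ({i | φ i = k} : Finset ι).biUnion f where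
  nonempty k := by
    obtain ⟨i, rfl⟩ := hφ k
    exact (hf.nonempty i).mono (subset_biUnion_of_mem f (by simp))
  disjoint k l hkl := by
    simp only [disjoint_biUnion_left, disjoint_biUnion_right, mem_filter, mem_univ, true_and]
    rintro i rfl j rfl
    exact hf.disjoint _ _ fun h => hkl (by rw [h])
  cover p hp := by
    obtain ⟨i, hi⟩ := hf.cover p hp
    exact ⟨φ i, mem_biUnion.mpr ⟨i, by simp, hi⟩⟩
  subset _ := biUnion_subset.mpr fun i _ => hf.subset i

end IsIndexedPartition

theorem mem_segment_of_map_eq {E F : Type*} [AddCommGroup E] [Module ℝ E] [AddCommGroup F]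
    [Module ℝ F] {π : E →ₗ[ℝ] F} {ℓ : E →ₗ[ℝ] ℝ} (hπℓ : Injective (π.prod ℓ)) {x y z : E}
    (hxy : π x = π y) (hxz : π x = π z) (hℓxz : ℓ x ≤ ℓ z) (hℓzy : ℓ z ≤ ℓ y) :
    z ∈ segment ℝ x y := by
  rw [segment_eq_image_lineMap]
  set θ := (ℓ z - ℓ x) / (ℓ y - ℓ x)
  refine ⟨θ, ⟨div_nonneg (by linarith) (by linarith), div_le_one_of_le₀ (by linarith)
    (by linarith)⟩, hπℓ ?_⟩
  -- when `ℓ x = ℓ y` the junk value `θ = 0` still works, since then `ℓ z = ℓ x`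
  have hθ : θ * (ℓ y - ℓ x) = ℓ z - ℓ x := by
    rcases eq_or_ne (ℓ y - ℓ x) 0 with h | h
    · rw [h, mul_zero]; linarith
    · exact div_mul_cancel₀ _ h
  refine Prod.ext ?_ ?_ <;>
    simp only [AffineMap.lineMap_apply_module, LinearMap.prod_apply, Function.prod, map_add,
      map_smul, Prod.fst_add, Prod.snd_add, Prod.smul_fst, Prod.smul_snd, smul_eq_mul]
  · rw [← hxy, ← hxz, ← add_smul, sub_add_cancel, one_smul]
  · linear_combination hθ

theorem exists_median_pairing {α : Type*} [LinearOrder α] {n : ℕ} (hn : 0 < n) (t : Fin n → α) :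
    ∃ (k : Fin n) (φ : Fin n → Fin ((n + 1) / 2)),
      ∀ m, ∃ a b, φ a = m ∧ φ b = m ∧ t a ≤ t k ∧ t k ≤ t b := by
  set σ := Tuple.sort t
  have hσ : Monotone (t ∘ σ) := Tuple.monotone_sort t
  let fold : Fin n → Fin ((n + 1) / 2) := fun j => ⟨min j (n - 1 - j), by omega⟩
  refine ⟨σ ⟨(n + 1) / 2 - 1, by omega⟩, fold ∘ σ.symm, fun m => ⟨σ ⟨m, by omega⟩,
    σ ⟨n - 1 - m, by omega⟩, ?_, ?_, hσ ?_, hσ ?_⟩⟩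
  all_goals simp only [fold, comp_apply, Equiv.symm_apply_apply, Fin.ext_iff, Fin.le_def]; omega

theorem HasTverbergDepth.of_image {m k : ℕ}
    {π : EuclideanSpace ℝ (Fin m) →ₗ[ℝ] EuclideanSpace ℝ (Fin k)}
    {ℓ : EuclideanSpace ℝ (Fin m) →ₗ[ℝ] ℝ} (hπℓ : Injective (π.prod ℓ))
    {P : Finset (EuclideanSpace ℝ (Fin m))} {c' : EuclideanSpace ℝ (Fin k)} {r : ℕ}
    (h : HasTverbergDepth (P.image π) c' r) : ∃ c, HasTverbergDepth P c ((r + 1) / 2) := by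
  classical
  obtain ⟨g, hg, hc'⟩ := hasTverbergDepth_iff.mp h
  set part := fun i => P.filter (π · ∈ g i)
  have hpart : IsIndexedPartition P part := hg.comap π
  rcases Nat.eq_zero_or_pos r with rfl | hr
  · exact ⟨0, hasTverbergDepth_iff.mpr ⟨part, hpart, fun i => i.elim0⟩⟩
  have hlift : ∀ i, ∃ x ∈ convexHull ℝ (part i : Set _), π x = c' := by
    intro i
    have hg_sub : (g i : Set _) ⊆ π '' (part i : Set _) := fun q hq => by
      obtain ⟨p, hp, rfl⟩ := mem_image.mp (hg.subset i hq)
      exact ⟨p, mem_filter.mpr ⟨hp, hq⟩, rfl⟩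
    rw [← Set.mem_image, LinearMap.image_convexHull]
    exact convexHull_mono hg_sub (hc' i)
  choose x hx hπx using hlift
  obtain ⟨k, φ, hφ⟩ := exists_median_pairing hr (ℓ ∘ x)
  have hφ_surj : Surjective φ := fun m => (hφ m).imp fun _ h => h.choose_spec.1
  refine ⟨x k, hasTverbergDepth_iff.mpr ⟨_, hpart.coarsen φ hφ_surj, fun n => ?_⟩⟩
  obtain ⟨a, b, rfl, hb, hak, hkb⟩ := hφ n
  have hsub : ∀ i, φ i = φ a → convexHull ℝ (part i : Set (EuclideanSpace ℝ (Fin m))) ⊆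
      convexHull ℝ (({j | φ j = φ a} : Finset (Fin r)).biUnion part :
        Set (EuclideanSpace ℝ (Fin m))) := fun i hi =>
    convexHull_mono <| coe_subset.mpr <|
      subset_biUnion_of_mem part (mem_filter.mpr ⟨mem_univ i, hi⟩)
  refine (convex_convexHull ℝ _).segment_subset (hsub a rfl (hx a)) (hsub b hb (hx b)) ?_
  exact mem_segment_of_map_eq hπℓ (by rw [hπx, hπx]) (by rw [hπx, hπx]) hak hkb

/-- The projection of `ℝ^{e+1}` onto `ℝ^e` along the direction `(w, 1)`. -/
noncomputable def obliqueProj (e : ℕ) (w : Fin e → ℝ) :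
    EuclideanSpace ℝ (Fin (e + 1)) →ₗ[ℝ] EuclideanSpace ℝ (Fin e) where
  toFun x := WithLp.toLp 2 fun i => x i.castSucc - x (Fin.last e) * w i
  map_add' x y := by ext i; simp only [PiLp.add_apply]; ring
  map_smul' a x := by
    ext i; simp only [PiLp.smul_apply, smul_eq_mul, RingHom.id_apply]; ring

theorem obliqueProj_apply (e : ℕ) (w : Fin e → ℝ) (x : EuclideanSpace ℝ (Fin (e + 1)))
    (i : Fin e) : obliqueProj e w x i = x i.castSucc - x (Fin.last e) * w i := rfl

theorem injective_obliqueProj_prod_last (e : ℕ) (w : Fin e → ℝ) :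
    Injective ((obliqueProj e w).prod (EuclideanSpace.projₗ (𝕜 := ℝ) (Fin.last e))) := by
  intro x y hxy
  simp only [LinearMap.prod_apply, Function.prod, PiLp.projₗ_apply, Prod.mk.injEq] at hxy
  obtain ⟨hπ, hlast⟩ := hxy
  ext j
  refine Fin.lastCases hlast (fun i => ?_) j
  have := congrArg (· i) hπ
  simp only [obliqueProj_apply, hlast] at this
  linarith

theorem exists_obliqueProj_injOn {e : ℕ} (he : 0 < e)
    (P : Finset (EuclideanSpace ℝ (Fin (e + 1)))) : ∃ w, Set.InjOn (obliqueProj e w) P := by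
  have : Nonempty (Fin e) := ⟨⟨0, he⟩⟩
  -- `w` must avoid the directions `(p - q) / (p - q)_last` of pairs of points at different heights
  obtain ⟨w, hw⟩ := Infinite.exists_notMem_finset <| (P ×ˢ P).image fun pq (i : Fin e) =>
    (pq.1 i.castSucc - pq.2 i.castSucc) / (pq.1 (Fin.last e) - pq.2 (Fin.last e))
  refine ⟨w, fun p hp q hq hpq => ?_⟩
  rcases eq_or_ne (p (Fin.last e)) (q (Fin.last e)) with hlast | hlast
  · refine injective_obliqueProj_prod_last e w ?_
    simp [Function.prod, hpq, hlast]
  · refine absurd (mem_image.mpr ⟨(p, q), mem_product.mpr ⟨hp, hq⟩, funext fun i => ?_⟩) hw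
    have := congrArg (· i) hpq
    simp only [obliqueProj_apply] at this
    rw [div_eq_iff (sub_ne_zero.mpr hlast)]
    linarith

theorem add_two_mul_sub_one_div (n a : ℕ) (ha : 0 < a) :
    (n + 2 * a - 1) / (2 * a) = ((n + a - 1) / a + 1) / 2 := by
  rcases Nat.eq_zero_or_pos n with rfl | hn
  · rw [Nat.div_eq_of_lt (show 0 + 2 * a - 1 < 2 * a by omega),
      Nat.div_eq_of_lt (show 0 + a - 1 < a by omega)]
  rw [show n + 2 * a - 1 = n - 1 + 2 * a by omega, show n + a - 1 = n - 1 + a by omega,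
    Nat.add_div_right _ (by omega), Nat.add_div_right _ ha, Nat.mul_comm,
    ← Nat.div_div_eq_div_mul]
  omega

/-- Inductive step of the simple algorithm: if every point set in `ℝ^{d-1}` has a
Tverberg point of depth `⌈n/2^{d-1}⌉`, then every `n`-point set in `ℝ^d` has a
Tverberg point of depth at least `⌈n/2^d⌉`. -/
theorem simple_algorithm_step (d : ℕ) (hd : 2 ≤ d)
    (hyp : ∀ Q : Finset (EuclideanSpace ℝ (Fin (d - 1))),
      ∃ c', HasTverbergDepth Q c' ((Q.card + 2 ^ (d - 1) - 1) / 2 ^ (d - 1)))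
    (P : Finset (EuclideanSpace ℝ (Fin d))) :
    ∃ c, HasTverbergDepth P c ((P.card + 2 ^ d - 1) / 2 ^ d) := by
  obtain ⟨e, rfl⟩ : ∃ e, d = e + 1 := ⟨d - 1, by omega⟩
  obtain ⟨w, hinj⟩ := exists_obliqueProj_injOn (by omega : 0 < e) P
  obtain ⟨c', hc'⟩ := hyp (P.image (obliqueProj e w))
  rw [card_image_of_injOn hinj] at hc'
  rw [pow_succ', add_two_mul_sub_one_div _ _ (by positivity)]
  exact hc'.of_image (injective_obliqueProj_prod_last e w)
end

section
/- Let n, d, ρ, β be such that ρ ≥ 2, 2 ≤ β ≤ n/ρ, and set δ = ⌈n/(βρ)⌉. If from any m-point set in R^d one can extract a Tverberg point of depth ⌈m/ρ⌉ with witnessing partition using at most ⌈m/ρ⌉·(d+1) points, then from any n-point set P ⊆ R^d one can extract at least α = ⌈n(1 − 1/β)/(δ(d+1))⌉ pairwise disjoint subsets Q_1, ..., Q_α of P such that each Q_i admits a Tverberg point of depth δ. -/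
lemma le_ceil_toNat {x : ℝ} (hx : 0 ≤ x) : x ≤ (⌈x⌉.toNat : ℝ) := by
  have h := Int.toNat_of_nonneg (Int.ceil_nonneg hx)
  calc x ≤ ((⌈x⌉ : ℤ) : ℝ) := Int.le_ceil x
    _ = ((⌈x⌉.toNat : ℤ) : ℝ) := by rw [h]
    _ = (⌈x⌉.toNat : ℝ) := by push_cast; ring

lemma ceil_toNat_lt {x : ℝ} (hx : 0 ≤ x) : (⌈x⌉.toNat : ℝ) < x + 1 := by
  have h := Int.toNat_of_nonneg (Int.ceil_nonneg hx)
  calc (⌈x⌉.toNat : ℝ) = ((⌈x⌉.toNat : ℤ) : ℝ) := by push_cast; ring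
    _ = ((⌈x⌉ : ℤ) : ℝ) := by rw [h]
    _ < x + 1 := Int.ceil_lt_add_one x

/-- Carathéodory: a point of the hull of a finite set in `ℝ^d` lies in the hull of at most
`d+1` of the points. -/
lemma carath {d : ℕ} (s : Finset (EuclideanSpace ℝ (Fin d))) (c : EuclideanSpace ℝ (Fin d))
    (hc : c ∈ convexHull ℝ (s : Set (EuclideanSpace ℝ (Fin d)))) :
    ∃ t : Finset (EuclideanSpace ℝ (Fin d)), t ⊆ s ∧ t.card ≤ d + 1 ∧
      c ∈ convexHull ℝ (t : Set (EuclideanSpace ℝ (Fin d))) := by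
  rw [convexHull_eq_union] at hc
  simp only [Set.mem_iUnion] at hc
  obtain ⟨t, hts, hai, hct⟩ := hc
  refine ⟨t, by exact_mod_cast hts, ?_, hct⟩
  have h1 := hai.card_le_finrank_succ
  have h2 : Module.finrank ℝ (vectorSpan ℝ (Set.range ((↑) : t → EuclideanSpace ℝ (Fin d))))
      ≤ Module.finrank ℝ (EuclideanSpace ℝ (Fin d)) := Submodule.finrank_le _
  have h3 : Module.finrank ℝ (EuclideanSpace ℝ (Fin d)) = d := finrank_euclideanSpace_fin
  have h4 : Fintype.card t = t.card := Fintype.card_coe t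
  omega

/-- From a Tverberg point of depth `r ≥ δ` one can extract a small subset admitting
a Tverberg point of depth `δ`. -/
lemma extract {d : ℕ} (δ r : ℕ) (hδr : δ ≤ r) (S : Finset (EuclideanSpace ℝ (Fin d)))
    (c : EuclideanSpace ℝ (Fin d)) (h : HasTverbergDepth S c r) :
    ∃ Q : Finset (EuclideanSpace ℝ (Fin d)), Q ⊆ S ∧ Q.card ≤ δ * (d + 1) ∧
      HasTverbergDepth Q c δ := by
  classical
  obtain ⟨f, hne, hdisj, hcov, hsub, hc⟩ := h
  choose t ht htc htm using fun i => carath (f i) c (hc i)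
  set g : Fin δ → Finset (EuclideanSpace ℝ (Fin d)) := fun i => t (Fin.castLE hδr i) with hg
  refine ⟨Finset.univ.biUnion g, ?_, ?_, g, ?_, ?_, ?_, ?_, ?_⟩
  · intro p hp
    obtain ⟨i, _, hi⟩ := Finset.mem_biUnion.1 hp
    exact hsub _ (ht _ hi)
  · calc (Finset.univ.biUnion g).card ≤ ∑ i, (g i).card := Finset.card_biUnion_le
      _ ≤ Finset.univ.card * (d + 1) :=
        Finset.sum_le_card_nsmul _ _ _ (fun i _ => htc _)
      _ = δ * (d + 1) := by simp
  · intro i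
    rcases (t (Fin.castLE hδr i)).eq_empty_or_nonempty with h | h
    · exfalso
      have := htm (Fin.castLE hδr i)
      rw [h] at this
      simp at this
    · exact h
  · intro i j hij
    have hne' : (Fin.castLE hδr i) ≠ (Fin.castLE hδr j) := by
      intro hc'
      have := congrArg Fin.val hc'
      simp only [Fin.coe_castLE] at this
      exact hij (Fin.ext this)
    exact (hdisj _ _ hne').mono (ht _) (ht _)
  · intro p hp
    obtain ⟨i, _, hi⟩ := Finset.mem_biUnion.1 hp
    exact ⟨i, hi⟩
  · intro i
    exact Finset.subset_biUnion_of_mem g (Finset.mem_univ i)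
  · intro i
    exact htm _

/-- The iteration: repeatedly extract disjoint small subsets of depth `δ`. -/
lemma iterate {d : ℕ} (δ m₀ : ℕ)
    (step : ∀ R : Finset (EuclideanSpace ℝ (Fin d)), m₀ ≤ R.card →
      ∃ Q : Finset (EuclideanSpace ℝ (Fin d)), Q ⊆ R ∧ Q.card ≤ δ * (d + 1) ∧
        ∃ c, HasTverbergDepth Q c δ) :
    ∀ (k : ℕ) (R : Finset (EuclideanSpace ℝ (Fin d))),
      m₀ + k * (δ * (d + 1)) ≤ R.card + δ * (d + 1) →
      ∃ Q : Fin k → Finset (EuclideanSpace ℝ (Fin d)),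
        (∀ i, Q i ⊆ R) ∧ (∀ i j, i ≠ j → Disjoint (Q i) (Q j)) ∧
        (∀ i, ∃ c, HasTverbergDepth (Q i) c δ) := by
  classical
  intro k
  induction k with
  | zero => exact fun R _ => ⟨fun i => i.elim0, fun i => i.elim0, fun i => i.elim0,
      fun i => i.elim0⟩
  | succ k ih =>
    intro R hR
    have hsm : (k + 1) * (δ * (d + 1)) = k * (δ * (d + 1)) + δ * (d + 1) := by ring
    have hm₀ : m₀ ≤ R.card := by omega
    obtain ⟨Q₀, hQ₀R, hQ₀c, hQ₀d⟩ := step R hm₀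
    have hQ₀card : Q₀.card ≤ R.card := Finset.card_le_card hQ₀R
    have hsd : (R \ Q₀).card = R.card - Q₀.card := Finset.card_sdiff_of_subset hQ₀R
    obtain ⟨Q, hQR, hQdisj, hQd⟩ := ih (R \ Q₀) (by omega)
    refine ⟨Fin.cases Q₀ Q, ?_, ?_, ?_⟩
    · intro i
      induction i using Fin.cases with
      | zero => exact hQ₀R
      | succ i => exact (hQR i).trans Finset.sdiff_subset
    · intro i j hij
      induction i using Fin.cases with
      | zero =>
        induction j using Fin.cases with
        | zero => exact absurd rfl hij
        | succ j =>
          simp only [Fin.cases_zero, Fin.cases_succ]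
          exact (Finset.sdiff_disjoint.mono_left (hQR j)).symm
      | succ i =>
        induction j using Fin.cases with
        | zero =>
          simp only [Fin.cases_zero, Fin.cases_succ]
          exact Finset.sdiff_disjoint.mono_left (hQR i)
        | succ j =>
          simp only [Fin.cases_succ]
          exact hQdisj i j (fun h => hij (congrArg Fin.succ h))
    · intro i
      induction i using Fin.cases with
      | zero => exact hQ₀d
      | succ i => exact hQd i

/-- Collection lemma: if from every `m`-point set one can extract a Tverberg point
of depth `⌈m/ρ⌉` whose witnessing partition uses at most `⌈m/ρ⌉(d+1)` points, then
any `n`-point set `P` contains at least `α = ⌈n(1-1/β)/(δ(d+1))⌉` pairwise disjoint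
subsets each admitting a Tverberg point of depth `δ = ⌈n/(βρ)⌉`. -/
theorem collection_lemma (d n : ℕ) (ρ β : ℝ) (hρ : 2 ≤ ρ) (hβ : 2 ≤ β)
    (hβn : β ≤ n / ρ)
    (δ : ℕ) (hδ : δ = ⌈(n : ℝ) / (β * ρ)⌉.toNat)
    (hyp : ∀ Q : Finset (EuclideanSpace ℝ (Fin d)),
      ∃ (c : EuclideanSpace ℝ (Fin d)) (S : Finset (EuclideanSpace ℝ (Fin d))),
        S ⊆ Q ∧ S.card ≤ (⌈(Q.card : ℝ) / ρ⌉.toNat) * (d + 1) ∧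
        HasTverbergDepth S c (⌈(Q.card : ℝ) / ρ⌉.toNat))
    (P : Finset (EuclideanSpace ℝ (Fin d))) (hP : P.card = n) :
    ∃ Q : Fin (⌈(n : ℝ) * (1 - 1 / β) / (δ * (d + 1))⌉.toNat) →
        Finset (EuclideanSpace ℝ (Fin d)),
      (∀ i, Q i ⊆ P) ∧
      (∀ i j, i ≠ j → Disjoint (Q i) (Q j)) ∧
      (∀ i, ∃ c, HasTverbergDepth (Q i) c δ) := by
  have hρ0 : (0:ℝ) < ρ := by linarith
  have hβ0 : (0:ℝ) < β := by linarith
  have hn0 : (0:ℝ) ≤ n := Nat.cast_nonneg n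
  set m₀ : ℕ := ⌈(n : ℝ) / β⌉.toNat with hm₀
  set α : ℕ := ⌈(n : ℝ) * (1 - 1 / β) / (δ * (d + 1))⌉.toNat with hα
  have hm₀ge : (n : ℝ) / β ≤ m₀ := le_ceil_toNat (div_nonneg hn0 hβ0.le)
  -- the key step for the iteration
  have step : ∀ R : Finset (EuclideanSpace ℝ (Fin d)), m₀ ≤ R.card →
      ∃ Q : Finset (EuclideanSpace ℝ (Fin d)), Q ⊆ R ∧ Q.card ≤ δ * (d + 1) ∧
        ∃ c, HasTverbergDepth Q c δ := by
    intro R hR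
    obtain ⟨M, hMR, hMcard⟩ := Finset.exists_subset_card_eq hR
    obtain ⟨c, S, hSM, _, hSdepth⟩ := hyp M
    rw [hMcard] at hSdepth
    have hδle : δ ≤ ⌈(m₀ : ℝ) / ρ⌉.toNat := by
      rw [hδ]
      apply Int.toNat_le_toNat
      apply Int.ceil_le_ceil
      rw [show (n : ℝ) / (β * ρ) = ((n : ℝ) / β) / ρ from by rw [div_div]]
      gcongr
    obtain ⟨Q, hQS, hQcard, hQdepth⟩ := extract δ _ hδle S c hSdepth
    exact ⟨Q, hQS.trans (hSM.trans hMR), hQcard, c, hQdepth⟩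
  -- numeric facts
  have hβρn : β * ρ ≤ n := (le_div_iff₀ hρ0).1 hβn
  have hδ1 : 1 ≤ δ := by
    have h1 : (1:ℝ) ≤ (n : ℝ) / (β * ρ) := by
      rw [le_div_iff₀ (by positivity)]
      linarith
    have h2 : (1:ℝ) ≤ (δ : ℝ) := le_trans h1 (hδ ▸ le_ceil_toNat (by positivity))
    exact_mod_cast h2
  have hmain : m₀ + α * (δ * (d + 1)) ≤ n + δ * (d + 1) := by
    have hDpos : (0:ℝ) < (δ : ℝ) * (d + 1) := by
      have : (1:ℝ) ≤ (δ:ℝ) := by exact_mod_cast hδ1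
      positivity
    have h1β : 1 / β ≤ 1 / 2 := by
      apply one_div_le_one_div_of_le <;> linarith
    have hx0 : (0:ℝ) ≤ (n : ℝ) * (1 - 1 / β) / ((δ:ℝ) * (d + 1)) := by
      apply div_nonneg _ hDpos.le
      apply mul_nonneg hn0
      linarith
    have hαlt : (α : ℝ) < (n : ℝ) * (1 - 1 / β) / ((δ:ℝ) * (d + 1)) + 1 := by
      rw [hα]
      exact ceil_toNat_lt hx0
    have hm₀lt : (m₀ : ℝ) < (n : ℝ) / β + 1 := ceil_toNat_lt (div_nonneg hn0 hβ0.le)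
    have hαD : (α : ℝ) * ((δ:ℝ) * (d + 1)) < (n : ℝ) * (1 - 1 / β) + (δ:ℝ) * (d + 1) := by
      have h := mul_lt_mul_of_pos_right hαlt hDpos
      rw [add_mul, one_mul, div_mul_cancel₀ _ hDpos.ne'] at h
      linarith
    have hsplit : (n : ℝ) * (1 - 1 / β) = (n : ℝ) - (n : ℝ) / β := by
      field_simp
    have hfin : (m₀ : ℝ) + (α : ℝ) * ((δ:ℝ) * (d + 1)) < (n : ℝ) + (δ:ℝ) * (d + 1) + 1 := by
      rw [hsplit] at hαD
      linarith
    have hnat : ((m₀ + α * (δ * (d + 1)) : ℕ) : ℝ) < ((n + δ * (d + 1) + 1 : ℕ) : ℝ) := by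
      push_cast
      push_cast at hfin
      linarith
    have := Nat.cast_lt (α := ℝ) |>.1 hnat
    omega
  exact iterate δ m₀ step α P (by omega)
end
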